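/- arXiv:0706.1904 — 5 statements merged into one kernel-verified Lean document; each statement's English description precedes it below -/
import Mathlib

section
/- For the geometric offspring pgf f(s) = (1−p)/(1−ps), one has g_N(s) = 1 − [p(1−s)/(1−ps)]^N for all s ∈ [0,1) and 0 < p < 1. -/
/-! Since `f⁽ʲ⁾(s) = (1 - p) j! pʲ / (1 - p s)ʲ⁺¹`, the `j`-th term of `g_N(s)` is `(1 - r) rʲ` with
`r = p (1 - s) / (1 - p s)`, so `g_N(s)` is a finite geometric sum. -/

open Nat

section GeometricPGF

variable {𝕜 : Type*} [NontriviallyNormedField 𝕜]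

theorem iteratedDeriv_div_one_sub_mul (a p x : 𝕜) (k : ℕ) :
    iteratedDeriv k (fun y => a / (1 - p * y)) x
      = a * k ! * p ^ k * (1 - p * x) ^ (-1 - k : ℤ) := by
  have hlin : (fun y => a / (1 - p * y)) = fun y => a * (-p * y + 1)⁻¹ := by
    ext y
    rw [div_eq_mul_inv, neg_mul, neg_add_eq_sub]
  have hsign : (-1 : 𝕜) ^ k * (-p) ^ k = p ^ k := by rw [← mul_pow, neg_one_mul, neg_neg]
  rw [hlin, iteratedDeriv_const_mul_field, iteratedDeriv_eq_iterate, iter_deriv_inv_linear]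
  simp only [neg_mul, neg_add_eq_sub]
  linear_combination a * k ! * (1 - p * x) ^ (-1 - k : ℤ) * hsign

-- No hypothesis `1 - p * x ≠ 0` is needed: when it fails, both sides are the junk value `0`.
theorem taylorTerm_div_one_sub_mul [CharZero 𝕜] (a p x : 𝕜) (k : ℕ) :
    (1 - x) ^ k * iteratedDeriv k (fun y => a / (1 - p * y)) x / k !
      = a / (1 - p * x) * (p * (1 - x) / (1 - p * x)) ^ k := by
  have hexp : (-1 - k : ℤ) = -((k + 1 : ℕ) : ℤ) := by push_cast; ring
  have hfact : (k ! : 𝕜) * (k ! : 𝕜)⁻¹ = 1 := mul_inv_cancel₀ (cast_ne_zero.2 k.factorial_ne_zero)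
  rw [iteratedDeriv_div_one_sub_mul, hexp, zpow_neg, zpow_natCast, div_pow, mul_pow]
  generalize 1 - p * x = d
  linear_combination (1 - x) ^ k * a * p ^ k * (d ^ (k + 1))⁻¹ * hfact

end GeometricPGF

theorem gN_geometric_general (p : ℝ) (hp1 : p < 1) (N : ℕ)
    (f : ℝ → ℝ) (hf : f = fun s => (1 - p) / (1 - p * s))
    (s : ℝ) (hs : s ∈ Set.Ico (0:ℝ) 1) :
    ∑ j ∈ Finset.range N, (1 - s) ^ j * iteratedDeriv j f s / (Nat.factorial j : ℝ)
      = 1 - (p * (1 - s) / (1 - p * s)) ^ N := by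
  obtain ⟨hs0, hs1⟩ := hs
  have hden : 1 - p * s ≠ 0 := by nlinarith [mul_nonneg (sub_nonneg.2 hp1.le) hs0]
  have hhead : (1 - p) / (1 - p * s) = 1 - p * (1 - s) / (1 - p * s) := by
    field_simp
    ring
  simp only [hf, taylorTerm_div_one_sub_mul, ← Finset.mul_sum, hhead, mul_neg_geom_sum]

/-- For the geometric pgf `f(s) = (1-p)/(1-ps)`, one has
`g_N(s) = 1 - (p(1-s)/(1-ps))^N` on `[0,1)`. -/
theorem gN_geometric (p : ℝ) (hp : 0 < p) (hp1 : p < 1) (N : ℕ) (hN : 1 ≤ N)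
    (f : ℝ → ℝ) (hf : f = fun s => (1 - p) / (1 - p * s))
    (s : ℝ) (hs : s ∈ Set.Ico (0:ℝ) 1) :
    ∑ j ∈ Finset.range N, (1 - s) ^ j * iteratedDeriv j f s / (Nat.factorial j : ℝ)
      = 1 - (p * (1 - s) / (1 - p * s)) ^ N :=
  gN_geometric_general p hp1 N f hf s hs
end

section
/- For the one-or-many distribution with r = N+1, the value γ = 1/N^2 is a fixed point of g_N with g_N'(1/N^2) = 1 when p = (1 − 1/N)(1 − 1/N^2)^{−N}. -/
/-!
Since `(N+1)(1-s)^N s + (1-s)^{N+1} = (1-s)^N (1+Ns)`, we have `g_N(s) = 1 - p(1-s)^N(1+Ns)` and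
`g_N'(s) = p N(N+1) s (1-s)^{N-1}`. At `γ = 1/N²` the choice of `p` gives `p(1-γ)^N = 1 - 1/N`, and
both claims reduce to `(1 - 1/N)(1 + Nγ) = (1 - 1/N) N(N+1)γ = 1 - γ`.
-/

lemma add_one_mul_one_sub_pow_mul_add_one_sub_pow {R : Type*} [CommRing R] (N : ℕ) (s : R) :
    ((N : R) + 1) * (1 - s) ^ N * s + (1 - s) ^ (N + 1) = (1 - s) ^ N * (1 + N * s) := by
  ring

lemma hasDerivAt_one_sub_pow_mul_one_add (N : ℕ) (s : ℝ) :
    HasDerivAt (fun s : ℝ => (1 - s) ^ N * (1 + N * s))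
      (-(N * (N + 1)) * s * (1 - s) ^ (N - 1)) s := by
  have hsub : HasDerivAt (fun s : ℝ => 1 - s) (-1) s := (hasDerivAt_id s).const_sub 1
  have hlin : HasDerivAt (fun s : ℝ => 1 + N * s) N s := by
    simpa using ((hasDerivAt_id s).const_mul (N : ℝ)).const_add 1
  refine ((hsub.fun_pow N).fun_mul hlin).congr_deriv ?_
  rcases N with _ | n
  · simp
  · simp only [Nat.add_sub_cancel, pow_succ]
    push_cast
    ring

lemma one_sub_one_div_sq_pos {x : ℝ} (hx : 1 < x) : 0 < 1 - 1 / x ^ 2 := by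
  rw [sub_pos, div_lt_one (by positivity)]
  nlinarith

/-- For the one-or-many distribution with `r = N+1` and
`p = (1 - 1/N)(1 - 1/N²)^{-N}`, the value `1/N²` is a fixed point of `g_N`
with `g_N'(1/N²) = 1`. -/
theorem one_or_many_general_critical (N : ℕ) (hN : 2 ≤ N)
    (p : ℝ) (hp : p = (1 - 1 / (N : ℝ)) * ((1 - 1 / (N : ℝ) ^ 2) ^ N)⁻¹)
    (g : ℝ → ℝ)
    (hg : g = fun s => 1 - p * (((N : ℝ) + 1) * (1 - s) ^ N * s + (1 - s) ^ (N + 1))) :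
    g (1 / (N : ℝ) ^ 2) = 1 / (N : ℝ) ^ 2 ∧ deriv g (1 / (N : ℝ) ^ 2) = 1 := by
  simp only [add_one_mul_one_sub_pow_mul_add_one_sub_pow] at hg
  subst hg
  set γ : ℝ := 1 / (N : ℝ) ^ 2 with hγ
  have hγ1 : 1 - γ ≠ 0 := (one_sub_one_div_sq_pos (by exact_mod_cast hN)).ne'
  have hpγ : p * (1 - γ) ^ N = 1 - 1 / N := by
    rw [hp, inv_mul_cancel_right₀ (pow_ne_zero N hγ1)]
  have hN0 : (N : ℝ) ≠ 0 := by positivity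
  have hvalue : (1 - 1 / N) * (1 + N * γ) = 1 - γ := by
    rw [hγ]; field_simp; ring
  have hslope : (1 - 1 / N) * (N * (N + 1) * γ) = 1 - γ := by
    rw [hγ]; field_simp; ring
  constructor
  · show 1 - p * ((1 - γ) ^ N * (1 + N * γ)) = γ
    rw [← mul_assoc, hpγ, hvalue]
    ring
  · rw [((hasDerivAt_one_sub_pow_mul_one_add N γ).const_mul p |>.const_sub 1).deriv]
    rw [← pow_sub_one_mul (by omega : N ≠ 0)] at hpγ
    apply mul_right_cancel₀ hγ1
    linear_combination (N * (N + 1) * γ) * hpγ + hslope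
end

section
/- Under the hypotheses of the Koenigs-type lemma with a_N = g_N'(γ_N) < 1 and γ_N ∈ (0,1) the least fixed point, the conditional survival probability satisfies P(V_{N,t} > 0 | V_N = 0) = (γ_N − γ_{N,t})/γ_N = d_N·a_N^t + O(a_N^{2t}) as t → ∞ for some constant d_N > 0, where γ_{N,t} is the t-th iterate of g_N evaluated at 0. -/
/-!
Put `e t = γ - g^[t] 0` and `a = g'(γ)`. The iterates increase to the least fixed point `γ`, so
`e t → 0`, and the second-order Taylor expansion of `g` at `γ` gives
`e (t + 1) = a * e t + O(e t ^ 2)`. Hence `e (t + 1) / e t → a`, and the increments of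
`a ^ t / e t` are `O(a ^ t)`, so `a ^ t / e t` converges to some `V` at rate `a ^ t`. Since
`e t → 0`, `V > 0`, and inverting gives `e t = V⁻¹ * a ^ t + O(a ^ (2 * t))`.
-/

open Filter Asymptotics Topology Set

theorem AnalyticAt.isBigO_sub_add_smul_deriv {𝕜 E : Type*} [NontriviallyNormedField 𝕜]
    [NormedAddCommGroup E] [NormedSpace 𝕜 E] {f : 𝕜 → E} {x : 𝕜} (hf : AnalyticAt 𝕜 f x) :
    (fun y => f (x + y) - (f x + y • deriv f x)) =O[𝓝 0] fun y => y ^ 2 := by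
  obtain ⟨p, hp⟩ := hf
  have hsum : ∀ y, p.partialSum 2 y = f x + y • deriv f x := fun y => by
    simp only [FormalMultilinearSeries.partialSum, Finset.sum_range_succ, Finset.sum_range_zero,
      zero_add, hp.coeff_zero, hp.deriv]
    simp [FormalMultilinearSeries.apply_eq_prod_smul_coeff]
  simpa only [hsum, ← norm_pow, isBigO_norm_right] using hp.isBigO_sub_partialSum_pow 2

section Iterate

variable {α : Type*} {f : α → α} {x p : α}

theorem MonotoneOn.mapsTo_Icc_of_le_map [Preorder α] (hf : MonotoneOn f (Icc x p))
    (hx : x ≤ f x) (hp : f p = p) : MapsTo f (Icc x p) (Icc x p) := fun _ hy =>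
  ⟨hx.trans (hf ⟨le_rfl, hy.1.trans hy.2⟩ hy hy.1),
    hp ▸ hf hy ⟨hy.1.trans hy.2, le_rfl⟩ hy.2⟩

theorem MonotoneOn.monotone_iterate_of_le_map [Preorder α] {s : Set α} (hf : MonotoneOn f s)
    (hs : MapsTo f s s) (hxs : x ∈ s) (hx : x ≤ f x) : Monotone fun n => f^[n] x := by
  refine monotone_nat_of_le_succ fun n => ?_
  induction n with
  | zero => exact hx
  | succ n ih =>
    simpa only [Function.iterate_succ_apply'] using
      hf (hs.iterate n hxs) (hs.iterate (n + 1) hxs) ih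

theorem StrictMonoOn.iterate_lt_of_le_map [PartialOrder α] (hf : StrictMonoOn f (Icc x p))
    (hx : x ≤ f x) (hp : f p = p) (hxp : x < p) (n : ℕ) : f^[n] x < p := by
  have hmaps := hf.monotoneOn.mapsTo_Icc_of_le_map hx hp
  induction n with
  | zero => exact hxp
  | succ n ih =>
    rw [Function.iterate_succ_apply', ← hp]
    exact hf (hmaps.iterate n ⟨le_rfl, hxp.le⟩) ⟨hxp.le, le_rfl⟩ ih

theorem tendsto_iterate_of_monotoneOn_Icc [ConditionallyCompleteLinearOrder α]
    [TopologicalSpace α] [OrderTopology α] (hf : MonotoneOn f (Icc x p))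
    (hcont : ContinuousOn f (Icc x p)) (hx : x ≤ f x) (hp : f p = p) (hxp : x ≤ p)
    (hleast : ∀ y ∈ Icc x p, f y = y → p ≤ y) :
    Tendsto (fun n => f^[n] x) atTop (𝓝 p) := by
  have hmaps := hf.mapsTo_Icc_of_le_map hx hp
  have hmem : ∀ n, f^[n] x ∈ Icc x p := fun n => hmaps.iterate n ⟨le_rfl, hxp⟩
  have hlim := tendsto_atTop_ciSup (hf.monotone_iterate_of_le_map hmaps ⟨le_rfl, hxp⟩ hx)
    ⟨p, forall_mem_range.2 fun n => (hmem n).2⟩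
  set L := ⨆ n, f^[n] x
  have hL : L ∈ Icc x p := isClosed_Icc.mem_of_tendsto hlim (Eventually.of_forall hmem)
  have hfix : f L = L := by
    refine tendsto_nhds_unique ((hcont L hL).tendsto.comp
      (tendsto_nhdsWithin_iff.2 ⟨hlim, Eventually.of_forall hmem⟩)) ?_
    simpa only [Function.comp_def, Function.iterate_succ_apply'] using
      hlim.comp (tendsto_add_atTop_nat 1)
  rwa [le_antisymm hL.2 (hleast L hL hfix)] at hlim

end Iterate

theorem exists_tendsto_isBigO_sub_of_isBigO_succ_sub {E : Type*} [NormedAddCommGroup E]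
    [CompleteSpace E] {v : ℕ → E} {r : ℝ} (hr0 : 0 ≤ r) (hr1 : r < 1)
    (hv : (fun n => v (n + 1) - v n) =O[atTop] fun n => r ^ n) :
    ∃ V, Tendsto v atTop (𝓝 V) ∧ (fun n => v n - V) =O[atTop] fun n => r ^ n := by
  obtain ⟨K, hK⟩ := hv.bound
  obtain ⟨N, hN⟩ := eventually_atTop.1 hK
  have hstep : ∀ m, dist (v (m + N)) (v (m + 1 + N)) ≤ K * r ^ N * r ^ m := fun m => by
    rw [dist_comm, dist_eq_norm, add_right_comm, mul_assoc, ← pow_add, add_comm N]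
    simpa [abs_of_nonneg hr0] using hN (m + N) (Nat.le_add_left N m)
  obtain ⟨V, hV⟩ := cauchySeq_tendsto_of_complete (cauchySeq_of_le_geometric r _ hr1 hstep)
  refine ⟨V, (tendsto_add_atTop_iff_nat N).1 hV, IsBigO.of_bound (K / (1 - r)) ?_⟩
  filter_upwards [eventually_ge_atTop N] with n hn
  obtain ⟨m, rfl⟩ := Nat.exists_eq_add_of_le' hn
  calc ‖v (m + N) - V‖ = dist (v (m + N)) V := (dist_eq_norm _ _).symm
    _ ≤ K * r ^ N * r ^ m / (1 - r) := dist_le_of_le_geometric_of_tendsto r _ hr1 hstep hV m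
    _ = K / (1 - r) * ‖r ^ (m + N)‖ := by
      rw [Real.norm_of_nonneg (pow_nonneg hr0 _), pow_add]; ring

section Linearization

variable {e : ℕ → ℝ} {a : ℝ}

theorem tendsto_succ_div_of_isBigO_sq (he_ne : ∀ n, e n ≠ 0) (he : Tendsto e atTop (𝓝 0))
    (hrec : (fun n => e (n + 1) - a * e n) =O[atTop] fun n => e n ^ 2) :
    Tendsto (fun n => e (n + 1) / e n) atTop (𝓝 a) := by
  have h : (fun n => e (n + 1) / e n - a) =O[atTop] e := by
    refine (hrec.mul (isBigO_refl (fun n => (e n)⁻¹) atTop)).congr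
      (fun n => by field_simp [he_ne n]) (fun n => by field_simp [he_ne n])
  exact tendsto_sub_nhds_zero_iff.1 (h.trans_tendsto he)

theorem isBigO_pow_div_succ_sub_pow_div (ha : 0 < a) (he_pos : ∀ n, 0 < e n)
    (he : Tendsto e atTop (𝓝 0))
    (hrec : (fun n => e (n + 1) - a * e n) =O[atTop] fun n => e n ^ 2) :
    (fun n => a ^ (n + 1) / e (n + 1) - a ^ n / e n) =O[atTop] fun n => a ^ n := by
  have he_ne n : e n ≠ 0 := (he_pos n).ne'
  have hquot : (fun n => (e (n + 1) - a * e n) / e n ^ 2) =O[atTop] fun _ => (1 : ℝ) :=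
    (isBigO_one_iff ℝ).2 (div_isBoundedUnder_of_isBigO hrec)
  have hratio : (fun n => (e (n + 1) / e n)⁻¹) =O[atTop] fun _ => (1 : ℝ) :=
    ((tendsto_succ_div_of_isBigO_sq he_ne he hrec).inv₀ ha.ne').isBigO_one ℝ
  refine ((isBigO_refl (fun n => a ^ n) atTop).mul (hquot.mul hratio)).neg_left.congr
    (fun n => ?_) (fun n => by rw [mul_one, mul_one])
  field_simp [he_ne n, he_ne (n + 1)]
  ring

theorem exists_pos_isBigO_sub_mul_pow (ha0 : 0 < a) (ha1 : a < 1) (he_pos : ∀ n, 0 < e n)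
    (he : Tendsto e atTop (𝓝 0))
    (hrec : (fun n => e (n + 1) - a * e n) =O[atTop] fun n => e n ^ 2) :
    ∃ d, 0 < d ∧ (fun n => e n - d * a ^ n) =O[atTop] fun n => a ^ (2 * n) := by
  obtain ⟨V, hV, hVO⟩ := exists_tendsto_isBigO_sub_of_isBigO_succ_sub (v := fun n => a ^ n / e n)
    ha0.le ha1 (isBigO_pow_div_succ_sub_pow_div ha0 he_pos he hrec)
  have hV_nonneg : 0 ≤ V := ge_of_tendsto' hV fun n => (div_pos (pow_pos ha0 n) (he_pos n)).le
  have hV_ne : V ≠ 0 := by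
    rintro rfl
    obtain ⟨K, hK⟩ := hVO.bound
    have hsmall : ∀ᶠ n in atTop, K * e n < 1 := by
      simpa using (he.const_mul K).eventually (gt_mem_nhds (by simp))
    obtain ⟨n, hnK, hn1⟩ := (hK.and hsmall).exists
    have han := pow_pos ha0 n
    rw [sub_zero, Real.norm_of_nonneg (div_pos han (he_pos n)).le, Real.norm_of_nonneg han.le,
      div_le_iff₀ (he_pos n)] at hnK
    nlinarith
  have hinv : (fun n => (a ^ n / e n)⁻¹ - V⁻¹) =O[atTop] fun n => a ^ n :=
    ((hasDerivAt_inv hV_ne).isBigO_sub.comp_tendsto hV).trans hVO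
  refine ⟨V⁻¹, inv_pos.2 (hV_nonneg.lt_of_ne' hV_ne), ?_⟩
  refine ((isBigO_refl (fun n => a ^ n) atTop).mul hinv).congr (fun n => ?_) (fun n => ?_)
  · field_simp [(pow_pos ha0 n).ne']
  · ring

end Linearization

theorem subcritical_survival_general (g : ℝ → ℝ)
    (hanal : AnalyticOn ℝ g (Metric.ball (0:ℝ) 1))
    (hmono : StrictMonoOn g (Set.Icc 0 1)) (h0 : 0 < g 0)
    (γ : ℝ) (hγ : γ ∈ Set.Ioo (0:ℝ) 1) (hfix : g γ = γ)
    (hleast : ∀ s ∈ Set.Icc (0:ℝ) 1, g s = s → γ ≤ s)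
    (ha0 : 0 < deriv g γ) (ha1 : deriv g γ < 1) :
    ∃ d : ℝ, 0 < d ∧
      (fun t : ℕ => (γ - g^[t] 0) / γ - d * (deriv g γ) ^ t) =O[atTop]
        (fun t : ℕ => (deriv g γ) ^ (2 * t)) := by
  obtain ⟨hγ0, hγ1⟩ := hγ
  have hIcc : Icc 0 γ ⊆ Icc 0 1 := Icc_subset_Icc_right hγ1.le
  have hball : Icc 0 γ ⊆ Metric.ball 0 1 := by
    rw [Real.ball_eq_Ioo]
    exact Icc_subset_Ioo (by norm_num) (by linarith)
  have hmono' : StrictMonoOn g (Icc 0 γ) := hmono.mono hIcc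
  set e : ℕ → ℝ := fun t => γ - g^[t] 0 with he_def
  have he_pos t : 0 < e t := sub_pos.2 (hmono'.iterate_lt_of_le_map h0.le hfix hγ0 t)
  have he : Tendsto e atTop (𝓝 0) := by
    simpa using (tendsto_iterate_of_monotoneOn_Icc hmono'.monotoneOn
      (hanal.continuousOn.mono hball) h0.le hfix hγ0.le fun s hs => hleast s (hIcc hs)).const_sub γ
  have hrec : (fun t => e (t + 1) - deriv g γ * e t) =O[atTop] fun t => e t ^ 2 := by
    have htaylor := ((hanal.analyticAt (Metric.isOpen_ball.mem_nhds (hball ⟨hγ0.le, le_rfl⟩))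
      ).isBigO_sub_add_smul_deriv.comp_tendsto (by simpa using he.neg)).neg_left
    refine htaylor.congr (fun t => ?_) (fun t => by simp)
    simp only [he_def, Function.comp_apply, Function.iterate_succ_apply', hfix, smul_eq_mul,
      neg_sub, add_sub_cancel]
    ring
  obtain ⟨D, hD, hDO⟩ := exists_pos_isBigO_sub_mul_pow ha0 ha1 he_pos he hrec
  refine ⟨D / γ, div_pos hD hγ0, (hDO.const_mul_left γ⁻¹).congr_left fun t => ?_⟩
  simp only [he_def]
  ring

/-- Subcritical survival asymptotics: with `γ_{N,t} = g^[t](0)` and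
`a = g'(γ) ∈ (0,1)` at the least fixed point `γ ∈ (0,1)`,
`(γ - γ_{N,t})/γ = d a^t + O(a^{2t})` for some `d > 0`. -/
theorem subcritical_survival (g : ℝ → ℝ)
    (hanal : AnalyticOn ℝ g (Metric.ball (0:ℝ) 1))
    (hmono : StrictMonoOn g (Set.Icc 0 1)) (h1 : g 1 = 1) (h0 : 0 < g 0)
    (γ : ℝ) (hγ : γ ∈ Set.Ioo (0:ℝ) 1) (hfix : g γ = γ)
    (hleast : ∀ s ∈ Set.Icc (0:ℝ) 1, g s = s → γ ≤ s)
    (ha0 : 0 < deriv g γ) (ha1 : deriv g γ < 1) :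
    ∃ d : ℝ, 0 < d ∧
      (fun t : ℕ => (γ - g^[t] 0) / γ - d * (deriv g γ) ^ t) =O[atTop]
        (fun t : ℕ => (deriv g γ) ^ (2 * t)) :=
  subcritical_survival_general g hanal hmono h0 γ hγ hfix hleast ha0 ha1
end

section
/- Under the hypotheses of the critical iteration lemma applied to g_N with γ_N ∈ (0,1), g_N'(γ_N) = 1 and b_N = g_N''(γ_N) ∈ (0,∞), one has (γ_N − γ_{N,t})/γ_N ~ 2/(γ_N b_N t) as t → ∞, where γ_{N,t} is the t-th iterate of g_N at 0. -/
/-!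
The orbit `γ_t = g^[t] 0` increases to the least fixed point `γ`, because `g` lies strictly
above the diagonal on `[0, γ)`. Near the tangential fixed point, `g y - y ~ (b / 2) (y - γ)²`,
so the gaps `ε_t = γ - γ_t` satisfy `ε_t - ε_{t+1} ~ (b / 2) ε_t²`. Then
`1 / ε_{t+1} - 1 / ε_t → b / 2`, and by Cesàro `1 / ε_t ~ b t / 2`.
-/

open Filter Topology Set Function

section Orbit

variable {f : ℝ → ℝ} {a γ x : ℝ}

lemma lt_apply_of_mem_Ico (hf : ContinuousOn f (Icc a γ)) (ha : a ≤ f a)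
    (hleast : ∀ s ∈ Icc a γ, IsFixedPt f s → γ ≤ s) (hx : x ∈ Ico a γ) : x < f x := by
  by_contra! hfx
  obtain ⟨c, hc, hfc⟩ :=
    exists_mem_Icc_isFixedPt (hf.mono (Icc_subset_Icc_right hx.2.le)) hx.1 ha hfx
  linarith [hleast c ⟨hc.1, hc.2.trans hx.2.le⟩ hfc, hc.2, hx.2]

lemma apply_lt_of_mem_Ico (hmono : StrictMonoOn f (Icc a γ)) (hfix : IsFixedPt f γ)
    (hx : x ∈ Ico a γ) : f x < γ := by
  simpa only [hfix.eq] using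
    hmono ⟨hx.1, hx.2.le⟩ ⟨hx.1.trans hx.2.le, le_rfl⟩ hx.2

lemma iterate_mem_Ico (hag : a < γ) (hf : ContinuousOn f (Icc a γ))
    (hmono : StrictMonoOn f (Icc a γ)) (ha : a ≤ f a) (hfix : IsFixedPt f γ)
    (hleast : ∀ s ∈ Icc a γ, IsFixedPt f s → γ ≤ s) (t : ℕ) : f^[t] a ∈ Ico a γ := by
  induction t with
  | zero => exact ⟨le_rfl, hag⟩
  | succ t ih =>
    rw [iterate_succ_apply']
    exact ⟨ih.1.trans (lt_apply_of_mem_Ico hf ha hleast ih).le,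
      apply_lt_of_mem_Ico hmono hfix ih⟩

lemma tendsto_iterate_nhdsLT (hag : a < γ) (hf : ContinuousOn f (Icc a γ))
    (hmono : StrictMonoOn f (Icc a γ)) (ha : a ≤ f a) (hfix : IsFixedPt f γ)
    (hleast : ∀ s ∈ Icc a γ, IsFixedPt f s → γ ≤ s) :
    Tendsto (fun t => f^[t] a) atTop (𝓝[<] γ) := by
  have hmem := iterate_mem_Ico hag hf hmono ha hfix hleast
  have hmono_orbit : Monotone fun t => f^[t] a := by
    refine monotone_nat_of_le_succ fun t => ?_
    rw [iterate_succ_apply']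
    exact (lt_apply_of_mem_Ico hf ha hleast (hmem t)).le
  have hbdd : BddAbove (range fun t => f^[t] a) := ⟨γ, by rintro _ ⟨t, rfl⟩; exact (hmem t).2.le⟩
  set L := ⨆ t, f^[t] a
  have hL : Tendsto (fun t => f^[t] a) atTop (𝓝 L) := tendsto_atTop_ciSup hmono_orbit hbdd
  have hLmem : L ∈ Icc a γ :=
    ⟨(hmem 0).1.trans (le_ciSup hbdd 0), ciSup_le fun t => (hmem t).2.le⟩
  have hLfix : IsFixedPt f L := by
    have hf_orbit : Tendsto (fun t => f (f^[t] a)) atTop (𝓝 (f L)) :=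
      (hf L hLmem).tendsto.comp
        (tendsto_nhdsWithin_iff.2 ⟨hL, Eventually.of_forall fun t => Ico_subset_Icc_self (hmem t)⟩)
    refine tendsto_nhds_unique ((tendsto_add_atTop_iff_nat 1).1 ?_) hL
    simpa only [iterate_succ_apply'] using hf_orbit
  have hLγ : L = γ := le_antisymm hLmem.2 (hleast L hLmem hLfix)
  rw [hLγ] at hL
  exact tendsto_nhdsWithin_iff.2 ⟨hL, Eventually.of_forall fun t => (hmem t).2⟩

end Orbit

lemma tendsto_sub_div_sq_nhdsNE_of_deriv_eq_one {f : ℝ → ℝ} {a b : ℝ}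
    (hdiff : ∀ᶠ y in 𝓝 a, DifferentiableAt ℝ f y) (hfix : f a = a) (hd : deriv f a = 1)
    (hb : HasDerivAt (deriv f) b a) :
    Tendsto (fun y => (f y - y) / (y - a) ^ 2) (𝓝[≠] a) (𝓝 (b / 2)) := by
  have hcont : ContinuousAt (fun y => f y - y) a :=
    hdiff.self_of_nhds.continuousAt.sub continuousAt_id
  have hslope : Tendsto (fun y => slope (deriv f) a y / 2) (𝓝[≠] a) (𝓝 (b / 2)) :=
    (hasDerivAt_iff_tendsto_slope.1 hb).div_const 2
  refine HasDerivAt.lhopital_zero_nhdsNE (f' := fun y => deriv f y - 1)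
    (g' := fun y => 2 * (y - a)) ?_ ?_ ?_ ?_ ?_ ?_
  · filter_upwards [nhdsWithin_le_nhds hdiff] with y hy
    exact hy.hasDerivAt.sub (hasDerivAt_id y)
  · filter_upwards with y
    simpa [mul_comm] using ((hasDerivAt_id y).sub_const a).fun_pow 2
  · filter_upwards [self_mem_nhdsWithin] with y hy
    exact mul_ne_zero two_ne_zero (sub_ne_zero.2 hy)
  · simpa [hfix] using hcont.tendsto.mono_left nhdsWithin_le_nhds
  · have hsq : Continuous fun y : ℝ => (y - a) ^ 2 := by fun_prop
    simpa using (hsq.tendsto a).mono_left nhdsWithin_le_nhds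
  · refine hslope.congr' ?_
    filter_upwards [self_mem_nhdsWithin] with y hy
    rw [slope_def_field, hd, div_div, mul_comm]

section Gaps

variable {ε : ℕ → ℝ} {c : ℝ}

lemma tendsto_inv_sub_inv_of_tendsto_sub_div_sq (hpos : ∀ t, 0 < ε t)
    (hε : Tendsto ε atTop (𝓝 0)) (hD : Tendsto (fun t => (ε t - ε (t + 1)) / ε t ^ 2) atTop (𝓝 c)) :
    Tendsto (fun t => (ε (t + 1))⁻¹ - (ε t)⁻¹) atTop (𝓝 c) := by
  -- with `D t = (ε t - ε (t + 1)) / ε t ^ 2`: `ε (t + 1) / ε t = 1 - D t * ε t` and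
  -- `(ε (t + 1))⁻¹ - (ε t)⁻¹ = D t / (ε (t + 1) / ε t)`
  have hratio : Tendsto (fun t => ε (t + 1) / ε t) atTop (𝓝 1) := by
    have h := ((hD.mul hε).const_sub 1)
    rw [mul_zero, sub_zero] at h
    refine h.congr fun t => ?_
    have := (hpos t).ne'
    field_simp
    ring
  have h := hD.div hratio one_ne_zero
  rw [div_one] at h
  refine h.congr fun t => ?_
  have := (hpos t).ne'
  have := (hpos (t + 1)).ne'
  simp only [Pi.div_apply]
  field_simp

lemma tendsto_div_natCast_of_tendsto_sub {u : ℕ → ℝ}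
    (hu : Tendsto (fun n => u (n + 1) - u n) atTop (𝓝 c)) :
    Tendsto (fun n : ℕ => u n / n) atTop (𝓝 c) := by
  have hmean : Tendsto (fun n : ℕ => (n : ℝ)⁻¹ * (u n - u 0)) atTop (𝓝 c) := by
    simpa only [Finset.sum_range_sub] using hu.cesaro
  have hvanish : Tendsto (fun n : ℕ => (n : ℝ)⁻¹ * u 0) atTop (𝓝 0) := by
    simpa using tendsto_inv_atTop_nhds_zero_nat.mul_const (u 0)
  simpa [div_eq_inv_mul, mul_sub] using hmean.add hvanish

lemma tendsto_natCast_mul_of_tendsto_sub_div_sq (hpos : ∀ t, 0 < ε t)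
    (hε : Tendsto ε atTop (𝓝 0)) (hD : Tendsto (fun t => (ε t - ε (t + 1)) / ε t ^ 2) atTop (𝓝 c))
    (hc : c ≠ 0) : Tendsto (fun t : ℕ => (t : ℝ) * ε t) atTop (𝓝 c⁻¹) := by
  have h := (tendsto_div_natCast_of_tendsto_sub (u := fun t => (ε t)⁻¹)
    (tendsto_inv_sub_inv_of_tendsto_sub_div_sq hpos hε hD)).inv₀ hc
  refine h.congr fun t => ?_
  rw [inv_div, div_inv_eq_mul]

end Gaps

theorem critical_survival_general (g : ℝ → ℝ)
    (hanal : AnalyticOn ℝ g (Metric.ball (0:ℝ) 1))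
    (hmono : StrictMonoOn g (Set.Icc 0 1)) (h0 : 0 < g 0)
    (γ : ℝ) (hγ : γ ∈ Set.Ioo (0:ℝ) 1) (hfix : g γ = γ)
    (hleast : ∀ s ∈ Set.Icc (0:ℝ) 1, g s = s → γ ≤ s)
    (hd : deriv g γ = 1) (hb : 0 < deriv (deriv g) γ) :
    Tendsto (fun t : ℕ => (t : ℝ) * (γ - g^[t] 0) / γ) atTop
      (nhds (2 / (γ * deriv (deriv g) γ))) := by
  have hanal' := Metric.isOpen_ball.analyticOn_iff_analyticOnNhd.1 hanal
  have hsub : Icc 0 γ ⊆ Metric.ball 0 1 := fun y hy => by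
    rw [Metric.mem_ball, Real.dist_eq, sub_zero, abs_lt]
    constructor <;> linarith [hy.1, hy.2, hγ.2]
  have hγball : γ ∈ Metric.ball (0:ℝ) 1 := hsub ⟨hγ.1.le, le_rfl⟩
  have hcont : ContinuousOn g (Icc 0 γ) := hanal.continuousOn.mono hsub
  have hmono' : StrictMonoOn g (Icc 0 γ) := hmono.mono (Icc_subset_Icc_right hγ.2.le)
  have hleast' : ∀ s ∈ Icc 0 γ, IsFixedPt g s → γ ≤ s :=
    fun s hs => hleast s ⟨hs.1, hs.2.trans hγ.2.le⟩
  have horbit := tendsto_iterate_nhdsLT hγ.1 hcont hmono' h0.le hfix hleast'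
  have hlocal := tendsto_sub_div_sq_nhdsNE_of_deriv_eq_one
    (Metric.isOpen_ball.eventually_mem hγball |>.mono fun y hy => (hanal' y hy).differentiableAt)
    hfix hd (hanal'.deriv γ hγball).differentiableAt.hasDerivAt
  have hdecrement : Tendsto (fun t => ((γ - g^[t] 0) - (γ - g^[t + 1] 0)) / (γ - g^[t] 0) ^ 2)
      atTop (𝓝 (deriv (deriv g) γ / 2)) := by
    refine ((hlocal.mono_left (nhdsWithin_mono γ fun y hy => ne_of_lt hy)).comp horbit).congr
      fun t => ?_
    simp only [comp_apply, iterate_succ_apply']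
    ring
  have hpos t : 0 < γ - g^[t] 0 :=
    sub_pos.2 (iterate_mem_Ico hγ.1 hcont hmono' h0.le hfix hleast' t).2
  have hgap_zero : Tendsto (fun t => γ - g^[t] 0) atTop (𝓝 0) := by
    simpa using (tendsto_nhds_of_tendsto_nhdsWithin horbit).const_sub γ
  convert (tendsto_natCast_mul_of_tendsto_sub_div_sq hpos hgap_zero hdecrement
    (by positivity)).div_const γ using 2
  field_simp

/-- Critical survival asymptotics: with `γ_{N,t} = g^[t](0)`, `g'(γ) = 1` and
`b = g''(γ) ∈ (0,∞)` at the least fixed point `γ ∈ (0,1)`,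
`(γ - γ_{N,t})/γ ~ 2/(γ b t)`, i.e. `t (γ - γ_{N,t})/γ → 2/(γ b)`. -/
theorem critical_survival (g : ℝ → ℝ)
    (hanal : AnalyticOn ℝ g (Metric.ball (0:ℝ) 1))
    (hmono : StrictMonoOn g (Set.Icc 0 1)) (h1 : g 1 = 1) (h0 : 0 < g 0)
    (γ : ℝ) (hγ : γ ∈ Set.Ioo (0:ℝ) 1) (hfix : g γ = γ)
    (hleast : ∀ s ∈ Set.Icc (0:ℝ) 1, g s = s → γ ≤ s)
    (hd : deriv g γ = 1) (hb : 0 < deriv (deriv g) γ) :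
    Tendsto (fun t : ℕ => (t : ℝ) * (γ - g^[t] 0) / γ) atTop
      (nhds (2 / (γ * deriv (deriv g) γ))) :=
  critical_survival_general g hanal hmono h0 γ hγ hfix hleast hd hb
end

section
/- For the geometric case g_2(s) = 1 − [(4/5)(1−s)/(1−(4/5)s)]^2 with γ_2 = 3/4, the iterates γ_{2,t} (γ_{2,0} = 0, γ_{2,t+1} = g_2(γ_{2,t})) satisfy (γ_2 − γ_{2,t})/γ_2 ~ 4/(3t) as t → ∞. -/
open Filter

private noncomputable def wseq : ℕ → ℝ
  | 0 => 4/3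
  | (t+1) => wseq t + 1 + 1/(wseq t + 3)

private lemma wseq_lb : ∀ t : ℕ, (4:ℝ)/3 + t ≤ wseq t := by
  intro t
  induction t with
  | zero => simp [wseq]
  | succ n ih =>
    have h3 : (0:ℝ) < wseq n + 3 := by push_cast at ih ⊢; nlinarith
    have : (0:ℝ) ≤ 1/(wseq n + 3) := by positivity
    simp only [wseq]
    push_cast at ih ⊢
    linarith

private lemma wseq_pos (t : ℕ) : (0:ℝ) < wseq t := by
  have := wseq_lb t
  have : (0:ℝ) ≤ (t:ℝ) := Nat.cast_nonneg t
  nlinarith [wseq_lb t]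

private lemma iter_eq (g : ℝ → ℝ)
    (hg : g = fun s => 1 - ((4/5) * (1 - s) / (1 - (4/5) * s)) ^ 2) :
    ∀ t : ℕ, g^[t] 0 = 3/4 - 1 / wseq t := by
  intro t
  induction t with
  | zero => norm_num [wseq]
  | succ n ih =>
    rw [Function.iterate_succ_apply', ih, hg]
    have hw := wseq_pos n
    have h3 : (0:ℝ) < wseq n + 3 := by linarith
    have hwn : wseq n ≠ 0 := ne_of_gt hw
    have h3n : wseq n + 3 ≠ 0 := ne_of_gt h3
    have hden : (1 : ℝ) - (4/5) * (3/4 - 1/wseq n) ≠ 0 := by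
      have : (1 : ℝ) - (4/5) * (3/4 - 1/wseq n) = 2/5 + (4/5)/wseq n := by ring
      rw [this]
      positivity
    have hw1 : (0:ℝ) < wseq (n+1) := wseq_pos (n+1)
    have hw1n : wseq n + 1 + 1/(wseq n + 3) ≠ 0 := by
      have : wseq (n+1) = wseq n + 1 + 1/(wseq n + 3) := rfl
      rw [← this]; exact ne_of_gt hw1
    have h2 : (wseq n + 2) ≠ 0 := by positivity
    have h2w : (2 * wseq n + 4) ≠ 0 := by positivity
    simp only [wseq]
    have L : 4/5 * (1 - (3/4 - 1/wseq n)) / (1 - 4/5 * (3/4 - 1/wseq n))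
        = (wseq n + 4) / (2 * wseq n + 4) := by
      rw [div_eq_div_iff hden h2w]
      field_simp
      ring
    have R : wseq n + 1 + 1/(wseq n + 3) = (wseq n + 2)^2 / (wseq n + 3) := by
      field_simp
      ring
    rw [L, R, one_div_div]
    field_simp
    ring

private lemma wseq_div_tendsto :
    Tendsto (fun t : ℕ => wseq t / t) atTop (nhds 1) := by
  have hu : Tendsto (fun k : ℕ => 1 + 1/(wseq k + 3)) atTop (nhds 1) := by
    have h0 : Tendsto (fun k : ℕ => 1/(wseq k + 3)) atTop (nhds 0) := by
      apply squeeze_zero (fun k => by have := wseq_pos k; positivity)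
        (fun k => ?_) tendsto_one_div_add_atTop_nhds_zero_nat
      · have := wseq_lb k
        have h1 : (0:ℝ) < (k:ℝ) + 1 := by positivity
        have h2 : (0:ℝ) < wseq k + 3 := by nlinarith [Nat.cast_nonneg (α := ℝ) k]
        apply div_le_div_of_nonneg_left (by norm_num) h1
        nlinarith [Nat.cast_nonneg (α := ℝ) k]
    simpa using (tendsto_const_nhds (x := (1:ℝ)) (f := atTop)).add h0
  have hsum : ∀ t : ℕ, wseq t = 4/3 + ∑ k ∈ Finset.range t, (1 + 1/(wseq k + 3)) := by
    intro t
    induction t with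
    | zero => simp [wseq]
    | succ n ih => rw [Finset.sum_range_succ, ← add_assoc, ← ih]; simp [wseq]; ring
  have hc := hu.cesaro
  have h43 : Tendsto (fun t : ℕ => (4:ℝ)/3/t) atTop (nhds 0) :=
    tendsto_const_nhds.div_atTop tendsto_natCast_atTop_atTop
  have := h43.add hc
  rw [zero_add] at this
  apply this.congr
  intro t
  rw [hsum t]
  rw [add_div, inv_mul_eq_div]

/-- For the geometric case `g_2(s) = 1 - ((4/5)(1-s)/(1-(4/5)s))²` with least
fixed point `γ_2 = 3/4`, the iterates satisfy `(γ_2 - γ_{2,t})/γ_2 ~ 4/(3t)`. -/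
theorem geometric_critical_survival
    (g : ℝ → ℝ) (hg : g = fun s => 1 - ((4/5) * (1 - s) / (1 - (4/5) * s)) ^ 2) :
    Tendsto (fun t : ℕ => (t : ℝ) * (3/4 - g^[t] 0) / (3/4)) atTop (nhds (4/3)) := by
  have hinv : Tendsto (fun t : ℕ => (wseq t / t)⁻¹) atTop (nhds 1) := by
    simpa using wseq_div_tendsto.inv₀ (by norm_num)
  have h := hinv.const_mul ((4:ℝ)/3)
  rw [mul_one] at h
  apply h.congr'
  filter_upwards [eventually_gt_atTop 0] with t ht
  have htR : (0:ℝ) < (t:ℝ) := by exact_mod_cast ht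
  rw [iter_eq g hg t]
  have hw := wseq_pos t
  field_simp
  ring
end
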